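/- Fix δ ∈ (0,1), a real κ ≥ 1 and an integer K ≥ 2. For θ > 0 define P(θ) := (K−1) ∫_0^1 (1−x^δ)^{K−2} δ x^{δ−1} C_κ(θx,1)^{−K} dx. Then lim_{θ→0⁺} (1 − P(θ))/θ = (1/κ) · (K!/(1+1/δ)_{K−1}) · δ/(1−δ), where (x)_n := x(x+1)⋯(x+n−1) is the rising factorial with (x)_0 := 1. -/

import Mathlib

open MeasureTheory Real Set Filter

/-- `C₁(s,m) := (1+s)^{−m} + m s^δ ∫_{1/(1+s)}^1 y^{m+δ−1} (1−y)^{−δ} dy`. -/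
noncomputable def C1 (δ s : ℝ) (m : ℕ) : ℝ :=
  (1 + s) ^ (-(m : ℝ)) +
    m * s ^ δ * ∫ y in (1 / (1 + s))..1, y ^ ((m : ℝ) + δ - 1) * (1 - y) ^ (-δ)

/-- `C_κ(s,m) := (κ−1)/κ + C₁(s,m)/κ`. -/
noncomputable def Cκ (δ κ s : ℝ) (m : ℕ) : ℝ := (κ - 1) / κ + C1 δ s m / κ

/-- The rising factorial `(x)_n = x(x+1)⋯(x+n−1)`, with `(x)_0 = 1`. -/
noncomputable def risingFac (x : ℝ) (n : ℕ) : ℝ := ∏ i ∈ Finset.range n, (x + i)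

open scoped Topology

/-!
Since `(K-1) ∫₀¹ w = 1` for the weight `w x = (1 - x^δ)^(K-2) δ x^(δ-1)`, the quotient
`(1 - P θ) / θ` is the `w`-average of `(1 - C_κ(θx,1)^(-K)) / θ`. Bounding `y^δ` between
`(1+s)^(-δ)` and `1` on `[1/(1+s), 1]` turns the integral in `C₁(s,1)` into an explicit one
and squeezes `C₁(s,1) - 1` between `s δ / ((1+s)(1-δ))` and `s ((1+s)^(δ-1)/(1-δ) - (1+s)⁻¹)`.
Hence `C_κ(·,1)` has right derivative `δ/((1-δ)κ)` at `0` and `C_κ(s,1) - 1 ≤ s/((1-δ)κ)`; with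
Bernoulli's inequality `1 - t^(-K) ≤ K (t - 1)` the latter is an integrable majorant, and
dominated convergence gives the limit `K δ/((1-δ)κ) · (K-1) ∫₀¹ w x · x dx`. The substitution
`u = x^δ` turns this last integral into the Beta integral `B(1 + 1/δ, K - 1)`.
-/

theorem risingFac_pos {x : ℝ} (hx : 0 < x) (n : ℕ) : 0 < risingFac x n :=
  Finset.prod_pos fun i _ => by positivity

theorem one_sub_zpow_neg_le {t : ℝ} (ht : 1 ≤ t) (n : ℕ) : 1 - t ^ (-(n:ℤ)) ≤ n * (t - 1) := by
  have ht0 : 0 < t := one_pos.trans_le ht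
  have hBernoulli := one_add_mul_le_pow (a := t⁻¹ - 1) (by linarith [inv_pos.2 ht0]) n
  rw [add_sub_cancel] at hBernoulli
  have hinv : 1 - t⁻¹ ≤ t - 1 := by
    rw [show 1 - t⁻¹ = (t - 1) / t by field_simp]
    exact div_le_self (by linarith) ht
  rw [zpow_neg, zpow_natCast, ← inv_pow]
  calc 1 - t⁻¹ ^ n ≤ n * (1 - t⁻¹) := by linarith
    _ ≤ n * (t - 1) := by gcongr

theorem integral_comp_rpow_mul_deriv_zero_one {p : ℝ} (hp : 0 < p) (G : ℝ → ℝ) :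
    ∫ x in (0:ℝ)..1, G (x ^ p) * (p * x ^ (p - 1)) = ∫ u in (0:ℝ)..1, G u := by
  have hsub := integral_comp_rpow_Ioi_of_pos (g := (Iic (1:ℝ)).indicator G) hp
  rw [setIntegral_indicator measurableSet_Iic, Ioi_inter_Iic] at hsub
  rw [intervalIntegral.integral_of_le zero_le_one, intervalIntegral.integral_of_le zero_le_one,
    ← hsub, ← Ioi_inter_Iic, ← setIntegral_indicator measurableSet_Iic]
  refine setIntegral_congr_fun measurableSet_Ioi fun x (hx : 0 < x) => ?_
  have hmem : x ^ p ∈ Iic (1:ℝ) ↔ x ∈ Iic 1 := by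
    simp only [mem_Iic, rpow_le_one_iff_of_pos hx, hp.le, hp.not_ge, and_true, and_false, false_or]
  by_cases hx1 : x ∈ Iic (1:ℝ)
  · simp [indicator_of_mem hx1, indicator_of_mem (hmem.2 hx1), mul_comm]
  · simp [indicator_of_notMem hx1, indicator_of_notMem (mt hmem.1 hx1)]

theorem integral_rpow_mul_one_sub_pow {a : ℝ} (ha : -1 < a) (n : ℕ) :
    ∫ x in (0:ℝ)..1, x ^ a * (1 - x) ^ n = n.factorial / risingFac (a + 1) (n + 1) := by
  have hbeta := Complex.betaIntegral_eval_nat_add_one_right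
    (u := (a:ℂ) + 1) (by simp only [Complex.add_re, Complex.ofReal_re, Complex.one_re]; linarith) n
  rw [Complex.betaIntegral] at hbeta
  have hcongr : ∫ x : ℝ in (0:ℝ)..1, (x:ℂ) ^ ((a:ℂ) + 1 - 1) * (1 - (x:ℂ)) ^ ((n:ℂ) + 1 - 1)
      = ∫ x : ℝ in (0:ℝ)..1, ((x ^ a * (1 - x) ^ n : ℝ) : ℂ) := by
    refine intervalIntegral.integral_congr fun x hx => ?_
    rw [uIcc_of_le zero_le_one] at hx
    simp only [add_sub_cancel_right, Complex.cpow_natCast]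
    rw [← Complex.ofReal_cpow hx.1]
    push_cast
    ring
  rw [hcongr, intervalIntegral.integral_ofReal] at hbeta
  unfold risingFac
  exact_mod_cast hbeta

section

variable {δ κ : ℝ}

theorem intervalIntegrable_one_sub_rpow_pow_mul_rpow (hδ : 0 < δ) (k : ℕ) :
    IntervalIntegrable (fun x => (1 - x ^ δ) ^ k * δ * x ^ (δ - 1)) volume 0 1 :=
  (intervalIntegral.intervalIntegrable_rpow' (by linarith)).continuousOn_mul
    ((((continuous_const.sub (continuous_id.rpow_const fun _ => Or.inr hδ.le)).pow k).mul
      continuous_const).continuousOn)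

theorem integral_one_sub_rpow_pow_mul_rpow (hδ : 0 < δ) (k : ℕ) :
    ∫ x in (0:ℝ)..1, (1 - x ^ δ) ^ k * δ * x ^ (δ - 1) = ((k:ℝ) + 1)⁻¹ := by
  calc ∫ x in (0:ℝ)..1, (1 - x ^ δ) ^ k * δ * x ^ (δ - 1)
      = ∫ x in (0:ℝ)..1, (1 - x ^ δ) ^ k * (δ * x ^ (δ - 1)) := by
        simp only [mul_assoc]
    _ = ∫ u in (0:ℝ)..1, (1 - u) ^ k :=
        integral_comp_rpow_mul_deriv_zero_one hδ fun u => (1 - u) ^ k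
    _ = ((k:ℝ) + 1)⁻¹ := by simp [intervalIntegral.integral_comp_sub_left fun u : ℝ => u ^ k]

theorem integral_one_sub_rpow_pow_mul_rpow_mul_self (hδ : 0 < δ) (k : ℕ) :
    ∫ x in (0:ℝ)..1, (1 - x ^ δ) ^ k * δ * x ^ (δ - 1) * x
      = k.factorial / risingFac (1 + 1 / δ) (k + 1) := by
  calc ∫ x in (0:ℝ)..1, (1 - x ^ δ) ^ k * δ * x ^ (δ - 1) * x
      = ∫ x in (0:ℝ)..1, (x ^ δ) ^ (1 / δ) * (1 - x ^ δ) ^ k * (δ * x ^ (δ - 1)) := by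
        refine intervalIntegral.integral_congr fun x hx => ?_
        rw [uIcc_of_le zero_le_one] at hx
        simp only [← rpow_mul hx.1, mul_one_div_cancel hδ.ne', rpow_one]
        ring
    _ = ∫ u in (0:ℝ)..1, u ^ (1 / δ) * (1 - u) ^ k :=
        integral_comp_rpow_mul_deriv_zero_one hδ fun u => u ^ (1 / δ) * (1 - u) ^ k
    _ = k.factorial / risingFac (1 + 1 / δ) (k + 1) := by
        rw [integral_rpow_mul_one_sub_pow (by have := one_div_pos.2 hδ; linarith), add_comm]

theorem intervalIntegrable_one_sub_rpow_neg (hδ : δ < 1) (c : ℝ) :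
    IntervalIntegrable (fun y => (1 - y) ^ (-δ)) volume c 1 := by
  simpa using (intervalIntegral.intervalIntegrable_rpow' (a := 1 - c) (b := 0)
    (by linarith : (-1:ℝ) < -δ)).comp_sub_left 1

theorem intervalIntegrable_rpow_mul_one_sub_rpow_neg (hδ0 : 0 ≤ δ) (hδ1 : δ < 1) (c : ℝ) :
    IntervalIntegrable (fun y => y ^ δ * (1 - y) ^ (-δ)) volume c 1 :=
  (intervalIntegrable_one_sub_rpow_neg hδ1 c).continuousOn_mul
    (continuous_id.rpow_const fun _ => Or.inr hδ0).continuousOn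

theorem integral_one_sub_rpow_neg (hδ : δ < 1) (c : ℝ) :
    ∫ y in c..1, (1 - y) ^ (-δ) = (1 - c) ^ (1 - δ) / (1 - δ) := by
  rw [intervalIntegral.integral_comp_sub_left (fun y => y ^ (-δ)),
    integral_rpow (Or.inl (by linarith)), sub_self, neg_add_eq_sub,
    zero_rpow (by linarith), sub_zero]

theorem integral_rpow_mul_one_sub_rpow_neg_le (hδ0 : 0 ≤ δ) (hδ1 : δ < 1) {c : ℝ}
    (hc : c ∈ Icc (0:ℝ) 1) :
    ∫ y in c..1, y ^ δ * (1 - y) ^ (-δ) ≤ (1 - c) ^ (1 - δ) / (1 - δ) := by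
  rw [← integral_one_sub_rpow_neg hδ1]
  refine intervalIntegral.integral_mono_on hc.2
    (intervalIntegrable_rpow_mul_one_sub_rpow_neg hδ0 hδ1 c) ?_ fun y hy => ?_
  · exact intervalIntegrable_one_sub_rpow_neg hδ1 c
  · have hy0 : 0 ≤ y := hc.1.trans hy.1
    exact mul_le_of_le_one_left (rpow_nonneg (by linarith [hy.2]) _)
      (rpow_le_one hy0 hy.2 hδ0)

theorem le_integral_rpow_mul_one_sub_rpow_neg (hδ0 : 0 ≤ δ) (hδ1 : δ < 1) {c : ℝ}
    (hc : c ∈ Icc (0:ℝ) 1) :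
    c ^ δ * ((1 - c) ^ (1 - δ) / (1 - δ)) ≤ ∫ y in c..1, y ^ δ * (1 - y) ^ (-δ) := by
  rw [← integral_one_sub_rpow_neg hδ1, ← intervalIntegral.integral_const_mul]
  refine intervalIntegral.integral_mono_on hc.2 ?_
    (intervalIntegrable_rpow_mul_one_sub_rpow_neg hδ0 hδ1 c) fun y hy => ?_
  · exact (intervalIntegrable_one_sub_rpow_neg hδ1 c).const_mul _
  · exact mul_le_mul_of_nonneg_right (rpow_le_rpow hc.1 hy.1 hδ0)
      (rpow_nonneg (by linarith [hy.2]) _)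

theorem C1_zero (hδ : δ ≠ 0) (m : ℕ) : C1 δ 0 m = 1 := by
  simp [C1, zero_rpow hδ]

theorem C1_one (s : ℝ) :
    C1 δ s 1 = (1 + s)⁻¹ + s ^ δ * ∫ y in (1 + s)⁻¹..1, y ^ δ * (1 - y) ^ (-δ) := by
  simp [C1, rpow_neg_one]

theorem C1_one_sub_one_le (hδ : δ ∈ Ioo (0:ℝ) 1) {s : ℝ} (hs : 0 ≤ s) :
    C1 δ s 1 - 1 ≤ s * (((1 + s)⁻¹) ^ (1 - δ) / (1 - δ) - (1 + s)⁻¹) := by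
  set c := (1 + s)⁻¹ with hc_def
  have hc : c ∈ Icc (0:ℝ) 1 := ⟨by positivity, inv_le_one_of_one_le₀ (by linarith)⟩
  have h1c : 1 - c = s * c := by rw [hc_def]; field_simp; ring
  have hpow : s ^ δ * (1 - c) ^ (1 - δ) = s * c ^ (1 - δ) := by
    rw [h1c, mul_rpow hs hc.1, ← mul_assoc, ← rpow_add' hs (by norm_num), add_sub_cancel,
      rpow_one]
  have hint := integral_rpow_mul_one_sub_rpow_neg_le hδ.1.le hδ.2 hc
  calc C1 δ s 1 - 1 = s ^ δ * (∫ y in c..1, y ^ δ * (1 - y) ^ (-δ)) - (1 - c) := by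
        rw [C1_one, ← hc_def]; ring
    _ ≤ s ^ δ * ((1 - c) ^ (1 - δ) / (1 - δ)) - (1 - c) := by
        gcongr
    _ = s * (c ^ (1 - δ) / (1 - δ) - c) := by
        rw [mul_div_assoc', hpow, h1c]; ring

theorem C1_one_sub_one_ge (hδ : δ ∈ Ioo (0:ℝ) 1) {s : ℝ} (hs : 0 ≤ s) :
    s * ((1 + s)⁻¹ * (δ / (1 - δ))) ≤ C1 δ s 1 - 1 := by
  set c := (1 + s)⁻¹ with hc_def
  have hc : c ∈ Icc (0:ℝ) 1 := ⟨by positivity, inv_le_one_of_one_le₀ (by linarith)⟩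
  have h1c : 1 - c = s * c := by rw [hc_def]; field_simp; ring
  have hsc : 0 ≤ s * c := mul_nonneg hs hc.1
  have hpow : s ^ δ * (c ^ δ * ((1 - c) ^ (1 - δ) / (1 - δ))) = s * c / (1 - δ) := by
    rw [← mul_assoc, mul_div_assoc', ← mul_rpow hs hc.1, h1c,
      ← rpow_add' hsc (by norm_num), add_sub_cancel, rpow_one]
  have hint := le_integral_rpow_mul_one_sub_rpow_neg hδ.1.le hδ.2 hc
  have hδ1 : 1 - δ ≠ 0 := by linarith [hδ.2]
  calc s * (c * (δ / (1 - δ))) = s ^ δ * (c ^ δ * ((1 - c) ^ (1 - δ) / (1 - δ))) - (1 - c) := by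
        rw [hpow, h1c]; field_simp; ring
    _ ≤ s ^ δ * (∫ y in c..1, y ^ δ * (1 - y) ^ (-δ)) - (1 - c) := by
        gcongr
    _ = C1 δ s 1 - 1 := by
        rw [C1_one, ← hc_def]; ring

theorem C1_one_sub_one_le_div (hδ : δ ∈ Ioo (0:ℝ) 1) {s : ℝ} (hs : 0 ≤ s) :
    C1 δ s 1 - 1 ≤ s / (1 - δ) := by
  have hc0 : 0 ≤ (1 + s)⁻¹ := by positivity
  have hc1 : ((1 + s)⁻¹) ^ (1 - δ) ≤ 1 :=
    rpow_le_one hc0 (inv_le_one_of_one_le₀ (by linarith)) (by linarith [hδ.2])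
  calc C1 δ s 1 - 1 ≤ s * (((1 + s)⁻¹) ^ (1 - δ) / (1 - δ) - (1 + s)⁻¹) :=
        C1_one_sub_one_le hδ hs
    _ ≤ s * (1 / (1 - δ)) := by
        have hd : 0 < 1 - δ := by linarith [hδ.2]
        gcongr
        linarith [div_le_div_of_nonneg_right hc1 hd.le]
    _ = s / (1 - δ) := by ring

theorem hasDerivWithinAt_C1_one (hδ : δ ∈ Ioo (0:ℝ) 1) :
    HasDerivWithinAt (fun s => C1 δ s 1) (δ / (1 - δ)) (Ioi 0) 0 := by
  have hd : 1 - δ ≠ 0 := by linarith [hδ.2]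
  rw [hasDerivWithinAt_iff_tendsto_slope' self_notMem_Ioi]
  have hlow : Tendsto (fun s : ℝ => (1 + s)⁻¹ * (δ / (1 - δ))) (𝓝[>] 0) (𝓝 (δ / (1 - δ))) := by
    have : ContinuousAt (fun s : ℝ => (1 + s)⁻¹ * (δ / (1 - δ))) 0 := by
      fun_prop (disch := norm_num)
    simpa using this.tendsto.mono_left nhdsWithin_le_nhds
  have hup : Tendsto (fun s : ℝ => ((1 + s)⁻¹) ^ (1 - δ) / (1 - δ) - (1 + s)⁻¹) (𝓝[>] 0)
      (𝓝 (δ / (1 - δ))) := by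
    have : ContinuousAt (fun s : ℝ => ((1 + s)⁻¹) ^ (1 - δ) / (1 - δ) - (1 + s)⁻¹) 0 := by
      fun_prop (disch := norm_num)
    convert this.tendsto.mono_left nhdsWithin_le_nhds using 2
    field_simp
    simp
  refine tendsto_of_tendsto_of_tendsto_of_le_of_le' hlow hup ?_ ?_ <;>
    filter_upwards [self_mem_nhdsWithin] with s (hs : 0 < s) <;>
    rw [slope_def_field, C1_zero hδ.1.ne', sub_zero]
  · rw [le_div_iff₀ hs, mul_comm]
    exact C1_one_sub_one_ge hδ hs.le
  · rw [div_le_iff₀ hs, mul_comm]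
    exact C1_one_sub_one_le hδ hs.le

theorem continuousOn_C1_one (hδ : δ ∈ Ioo (0:ℝ) 1) :
    ContinuousOn (fun s => C1 δ s 1) (Ici 0) := by
  have hprim : ContinuousOn (fun c => ∫ y in c..1, y ^ δ * (1 - y) ^ (-δ)) (uIcc 0 1) :=
    intervalIntegral.continuousOn_primitive_interval_left
      ((intervalIntegrable_iff' (by simp)).1
        (intervalIntegrable_rpow_mul_one_sub_rpow_neg hδ.1.le hδ.2 0))
  have hinv : ContinuousOn (fun s : ℝ => (1 + s)⁻¹) (Ici 0) :=
    (continuousOn_const.add continuousOn_id).inv₀ fun s (hs : 0 ≤ s) =>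
      (by positivity : (0:ℝ) < 1 + s).ne'
  simp only [C1_one]
  refine hinv.add (((continuous_id.rpow_const fun _ => Or.inr hδ.1.le).continuousOn).mul
    (hprim.comp hinv fun s (hs : 0 ≤ s) => ?_))
  rw [uIcc_of_le zero_le_one]
  exact ⟨by positivity, inv_le_one_of_one_le₀ (by linarith)⟩

theorem Cκ_sub_one (hκ : κ ≠ 0) (s : ℝ) (m : ℕ) : Cκ δ κ s m - 1 = (C1 δ s m - 1) / κ := by
  unfold Cκ
  field_simp
  ring

theorem Cκ_zero (hδ : δ ≠ 0) (hκ : κ ≠ 0) (m : ℕ) : Cκ δ κ 0 m = 1 := by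
  rw [← sub_eq_zero, Cκ_sub_one hκ, C1_zero hδ, sub_self, zero_div]

theorem one_le_Cκ_one (hδ : δ ∈ Ioo (0:ℝ) 1) (hκ : 0 < κ) {s : ℝ} (hs : 0 ≤ s) :
    1 ≤ Cκ δ κ s 1 := by
  have hlower : 0 ≤ s * ((1 + s)⁻¹ * (δ / (1 - δ))) :=
    mul_nonneg hs (mul_nonneg (by positivity) (div_nonneg hδ.1.le (by linarith [hδ.2])))
  rw [← sub_nonneg, Cκ_sub_one hκ.ne']
  exact div_nonneg (hlower.trans (C1_one_sub_one_ge hδ hs)) hκ.le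

theorem Cκ_one_sub_one_le (hδ : δ ∈ Ioo (0:ℝ) 1) (hκ : 0 < κ) {s : ℝ} (hs : 0 ≤ s) :
    Cκ δ κ s 1 - 1 ≤ s / (1 - δ) / κ := by
  rw [Cκ_sub_one hκ.ne']
  exact div_le_div_of_nonneg_right (C1_one_sub_one_le_div hδ hs) hκ.le

theorem hasDerivWithinAt_Cκ_one (hδ : δ ∈ Ioo (0:ℝ) 1) (κ : ℝ) :
    HasDerivWithinAt (fun s => Cκ δ κ s 1) (δ / (1 - δ) / κ) (Ioi 0) 0 :=
  ((hasDerivWithinAt_C1_one hδ).div_const κ).const_add _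

theorem continuousOn_Cκ_one_mul_zpow (hδ : δ ∈ Ioo (0:ℝ) 1) (hκ : 0 < κ) {θ : ℝ} (hθ : 0 ≤ θ)
    (n : ℤ) : ContinuousOn (fun x => Cκ δ κ (θ * x) 1 ^ n) (Ici 0) := by
  have hmaps : MapsTo (fun x => θ * x) (Ici 0) (Ici 0) := fun x (hx : 0 ≤ x) =>
    mul_nonneg hθ hx
  have hC : ContinuousOn (fun x => Cκ δ κ (θ * x) 1) (Ici 0) :=
    (continuousOn_const.add ((continuousOn_C1_one hδ).div_const κ)).comp
      (continuous_const.mul continuous_id).continuousOn hmaps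
  exact hC.zpow₀ n fun x hx =>
    Or.inl (one_pos.trans_le (one_le_Cκ_one hδ hκ (hmaps hx))).ne'

theorem tendsto_one_sub_Cκ_one_mul_zpow_div (hδ : δ ∈ Ioo (0:ℝ) 1) (hκ : κ ≠ 0) (K : ℕ)
    {x : ℝ} (hx : 0 < x) :
    Tendsto (fun θ => (1 - Cκ δ κ (θ * x) 1 ^ (-(K:ℤ))) / θ) (𝓝[>] 0)
      (𝓝 (K * (δ / (1 - δ) / κ) * x)) := by
  have hC0 := Cκ_zero hδ.1.ne' hκ 1
  have hinner : HasDerivWithinAt (fun θ => Cκ δ κ (θ * x) 1) (δ / (1 - δ) / κ * x) (Ioi 0) 0 :=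
    (hasDerivWithinAt_Cκ_one hδ κ).comp_of_eq 0 (hasDerivAt_mul_const x).hasDerivWithinAt
      (fun θ (hθ : 0 < θ) => mul_pos hθ hx) (zero_mul x).symm
  have hF := (hasDerivAt_zpow (-(K:ℤ)) 1 (Or.inl one_ne_zero)).comp_hasDerivWithinAt_of_eq 0
    hinner (by simp [hC0])
  rw [hasDerivWithinAt_iff_tendsto_slope' self_notMem_Ioi] at hF
  convert hF.neg using 1
  · ext θ
    simp only [zpow_neg, zpow_natCast, slope_def_field, Function.comp_apply, zero_mul, hC0,
      one_pow, inv_one, sub_zero]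
    ring
  · simp only [Int.cast_neg, Int.cast_natCast, one_zpow, mul_one, neg_mul, neg_neg,
      nhds_eq_nhds_iff]
    ring

theorem tendsto_integral_mul_one_sub_Cκ_one_mul_zpow_div (hδ : δ ∈ Ioo (0:ℝ) 1) (hκ : 0 < κ)
    {W : ℝ → ℝ} (hW : IntervalIntegrable W volume 0 1) (K : ℕ) :
    Tendsto (fun θ => ∫ x in (0:ℝ)..1, W x * ((1 - Cκ δ κ (θ * x) 1 ^ (-(K:ℤ))) / θ)) (𝓝[>] 0)
      (𝓝 (∫ x in (0:ℝ)..1, W x * (K * (δ / (1 - δ) / κ) * x))) := by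
  have hcont : ∀ θ, 0 ≤ θ →
      ContinuousOn (fun x => (1 - Cκ δ κ (θ * x) 1 ^ (-(K:ℤ))) / θ) (uIcc 0 1) := fun θ hθ =>
    (continuousOn_const.sub ((continuousOn_Cκ_one_mul_zpow hδ hκ hθ _).mono
      (by rw [uIcc_of_le zero_le_one]; exact Icc_subset_Ici_self))).div_const θ
  refine intervalIntegral.tendsto_integral_filter_of_dominated_convergence
    (fun x => |W x| * (K * (x / (1 - δ) / κ))) ?_ ?_ ?_ ?_
  · filter_upwards [self_mem_nhdsWithin] with θ (hθ : 0 < θ)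
    exact (hW.mul_continuousOn (hcont θ hθ.le)).def'.aestronglyMeasurable
  · filter_upwards [self_mem_nhdsWithin] with θ (hθ : 0 < θ)
    refine ae_of_all _ fun x hx => ?_
    rw [uIoc_of_le zero_le_one] at hx
    have hs : 0 ≤ θ * x := mul_nonneg hθ.le hx.1.le
    have hC := one_le_Cκ_one hδ hκ hs
    have hnonneg : 0 ≤ 1 - Cκ δ κ (θ * x) 1 ^ (-(K:ℤ)) :=
      sub_nonneg.2 (zpow_le_one_of_nonpos₀ hC (by simp))
    have hle : (1 - Cκ δ κ (θ * x) 1 ^ (-(K:ℤ))) / θ ≤ K * (x / (1 - δ) / κ) := by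
      rw [div_le_iff₀ hθ]
      calc 1 - Cκ δ κ (θ * x) 1 ^ (-(K:ℤ)) ≤ K * (Cκ δ κ (θ * x) 1 - 1) :=
            one_sub_zpow_neg_le hC K
        _ ≤ K * (θ * x / (1 - δ) / κ) := by gcongr; exact Cκ_one_sub_one_le hδ hκ hs
        _ = K * (x / (1 - δ) / κ) * θ := by ring
    rw [norm_mul, Real.norm_eq_abs, Real.norm_eq_abs, abs_of_nonneg (div_nonneg hnonneg hθ.le)]
    gcongr
  · exact hW.norm.mul_continuousOn (by fun_prop)
  · refine ae_of_all _ fun x hx => ?_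
    rw [uIoc_of_le zero_le_one] at hx
    exact (tendsto_one_sub_Cκ_one_mul_zpow_div hδ hκ.ne' K hx.1).const_mul (W x)

theorem tendsto_one_sub_integral_mul_Cκ_one_mul_zpow_div (hδ : δ ∈ Ioo (0:ℝ) 1) (hκ : 0 < κ)
    {W : ℝ → ℝ} (hW : IntervalIntegrable W volume 0 1) (hW1 : ∫ x in (0:ℝ)..1, W x = 1)
    (K : ℕ) :
    Tendsto (fun θ => (1 - ∫ x in (0:ℝ)..1, W x * Cκ δ κ (θ * x) 1 ^ (-(K:ℤ))) / θ) (𝓝[>] 0)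
      (𝓝 (K * (δ / (1 - δ) / κ) * ∫ x in (0:ℝ)..1, W x * x)) := by
  have h := tendsto_integral_mul_one_sub_Cκ_one_mul_zpow_div hδ hκ hW K
  rw [← intervalIntegral.integral_const_mul]
  simp only [mul_left_comm _ (W _)]
  refine h.congr' ?_
  filter_upwards [self_mem_nhdsWithin] with θ (hθ : 0 < θ)
  have hWG : IntervalIntegrable (fun x => W x * Cκ δ κ (θ * x) 1 ^ (-(K:ℤ))) volume 0 1 :=
    hW.mul_continuousOn ((continuousOn_Cκ_one_mul_zpow hδ hκ hθ.le _).mono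
      (by rw [uIcc_of_le zero_le_one]; exact Icc_subset_Ici_self))
  calc ∫ x in (0:ℝ)..1, W x * ((1 - Cκ δ κ (θ * x) 1 ^ (-(K:ℤ))) / θ)
      = (∫ x in (0:ℝ)..1, (W x - W x * Cκ δ κ (θ * x) 1 ^ (-(K:ℤ)))) / θ := by
        rw [← intervalIntegral.integral_div]
        congr 1 with x
        ring
    _ = (1 - ∫ x in (0:ℝ)..1, W x * Cκ δ κ (θ * x) 1 ^ (-(K:ℤ))) / θ := by
        rw [intervalIntegral.integral_sub hW hWG, hW1]

end

/-- High-reliability asymptotics of the outage probability under `K`-BS coordination: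
with `P(θ) := (K−1) ∫_0^1 (1−x^δ)^{K−2} δ x^{δ−1} C_κ(θx,1)^{−K} dx`,
`lim_{θ→0⁺} (1 − P(θ))/θ = (1/κ) · (K!/(1+1/δ)_{K−1}) · δ/(1−δ)`. -/
theorem stmt_5 (δ κ : ℝ) (K : ℕ) (hδ : δ ∈ Set.Ioo (0:ℝ) 1) (hκ : 1 ≤ κ) (hK : 2 ≤ K) :
    Tendsto
      (fun θ : ℝ =>
        (1 - ((K : ℝ) - 1) *
            ∫ x in (0:ℝ)..1,
              (1 - x ^ δ) ^ (K - 2) * δ * x ^ (δ - 1) * Cκ δ κ (θ * x) 1 ^ (-(K : ℤ))) / θ)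
      (nhdsWithin 0 (Set.Ioi 0))
      (nhds ((1 / κ) * ((K.factorial : ℝ) / risingFac (1 + 1 / δ) (K - 1)) * (δ / (1 - δ)))) := by
  obtain ⟨k, rfl⟩ : ∃ k, K = k + 2 := ⟨K - 2, by omega⟩
  set W : ℝ → ℝ := fun x => ((k:ℝ) + 1) * ((1 - x ^ δ) ^ k * δ * x ^ (δ - 1)) with hW_def
  have hW : IntervalIntegrable W volume 0 1 :=
    (intervalIntegrable_one_sub_rpow_pow_mul_rpow hδ.1 k).const_mul _
  have hW1 : ∫ x in (0:ℝ)..1, W x = 1 := by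
    rw [intervalIntegral.integral_const_mul, integral_one_sub_rpow_pow_mul_rpow hδ.1]
    field_simp
  have hWx : ∫ x in (0:ℝ)..1, W x * x
      = (k + 1) * (k.factorial / risingFac (1 + 1 / δ) (k + 1)) := by
    simp only [hW_def, mul_assoc, intervalIntegral.integral_const_mul]
    rw [← integral_one_sub_rpow_pow_mul_rpow_mul_self hδ.1]
    simp only [mul_assoc]
  convert tendsto_one_sub_integral_mul_Cκ_one_mul_zpow_div hδ (one_pos.trans_le hκ) hW hW1
    (k + 2) using 2
  · rw [← intervalIntegral.integral_const_mul]
    congr 3 with x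
    simp only [hW_def, Nat.add_sub_cancel]
    push_cast
    ring
  · have hfac := risingFac_pos (by have := hδ.1; positivity : 0 < 1 + 1 / δ) (k + 1)
    have hδ1 : 1 - δ ≠ 0 := by linarith [hδ.2]
    have hκ0 : κ ≠ 0 := by linarith
    rw [hWx, Nat.factorial_succ, Nat.factorial_succ, show k + 2 - 1 = k + 1 from rfl]
    push_cast
    field_simp
    ring
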